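/- Let (A,∘) be a pre-Lie algebra over a field of characteristic zero and (l,r,V) a module with V finite-dimensional. Let T : V → A be a linear map, identified with the element Σᵢ T(vᵢ)⊗vᵢ* of (A⊕V*)⊗(A⊕V*) for a basis {vᵢ} of V with dual basis {vᵢ*}. Then r = T + σ(T) is a symmetric solution of the S-equation in the semidirect product pre-Lie algebra A ⋉_{l*−r*, −r*} V* if and only if T is an O-operator of (A,∘) associated to (l,r,V). -/

import Mathlib

set_option maxSynthPendingDepth 3
set_option synthInstance.maxHeartbeats 400000
set_option maxHeartbeats 1000000

open TensorProduct

/-- A pre-Lie algebra structure. -/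
def IsPreLie {K A : Type*} [Field K] [AddCommGroup A] [Module K A]
    (mul : A →ₗ[K] A →ₗ[K] A) : Prop :=
  ∀ x y z : A, mul (mul x y) z - mul x (mul y z) = mul (mul y x) z - mul y (mul x z)

/-- A module `(l,r,V)` of a pre-Lie algebra `(A,∘)`. -/
def IsPreLieModule {K A V : Type*} [Field K] [AddCommGroup A] [Module K A]
    [AddCommGroup V] [Module K V]
    (mul : A →ₗ[K] A →ₗ[K] A) (l r : A →ₗ[K] Module.End K V) : Prop :=
  (∀ x y : A, l x * l y - l (mul x y) = l y * l x - l (mul y x)) ∧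
  (∀ x y : A, l x * r y - r y * l x = r (mul x y) - r y * r x)

/-- An O-operator of a pre-Lie algebra `(A,∘)` associated to a module `(l,r,V)`. -/
def IsOOperator {K A V : Type*} [Field K] [AddCommGroup A] [Module K A]
    [AddCommGroup V] [Module K V]
    (mul : A →ₗ[K] A →ₗ[K] A) (l r : A →ₗ[K] Module.End K V) (T : V →ₗ[K] A) : Prop :=
  ∀ u v : V, mul (T u) (T v) = T (l (T u) v + r (T v) u)

/-- The dual map `ρ* : A → gl(V*)` defined by `⟨ρ*(x)v*, u⟩ = −⟨v*, ρ(x)u⟩`. -/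
noncomputable def dualRep {K A V : Type*} [Field K] [AddCommGroup A] [Module K A]
    [AddCommGroup V] [Module K V]
    (ρ : A →ₗ[K] Module.End K V) : A →ₗ[K] Module.End K (Module.Dual K V) :=
  -((Module.Dual.transpose (R := K) (M := V) (M' := V)) ∘ₗ ρ)

/-- The semidirect product pre-Lie algebra `A ⋉_{l*−r*, −r*} V*` on `A ⊕ V*`:
`(x+u)∗(y+v) = x∘y + (l*−r*)(x)v + (−r*)(y)u`. -/
noncomputable def semidirectMul {K A V : Type*} [Field K] [AddCommGroup A] [Module K A]
    [AddCommGroup V] [Module K V]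
    (mul : A →ₗ[K] A →ₗ[K] A) (l r : A →ₗ[K] Module.End K V) :
    (A × Module.Dual K V) →ₗ[K] (A × Module.Dual K V) →ₗ[K] (A × Module.Dual K V) :=
  LinearMap.mk₂ K
    (fun p q => (mul p.1 q.1,
      (dualRep l - dualRep r) p.1 q.2 + (-(dualRep r)) q.1 p.2))
    (by intros m m' n; simp [Prod.ext_iff]; abel)
    (by intros c m n; simp [Prod.ext_iff])
    (by intros m n n'; simp [Prod.ext_iff]; abel)
    (by intros c m n; simp [Prod.ext_iff])

/-- The element of `(A ⊕ V*) ⊗ (A ⊕ V*)` corresponding to a linear map `T : V → A`,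
i.e. `Σᵢ T(vᵢ) ⊗ vᵢ*` for a basis `{vᵢ}` of `V` with dual basis `{vᵢ*}`. -/
noncomputable def elemOfMap {K A V : Type*} [Field K] [AddCommGroup A] [Module K A]
    [AddCommGroup V] [Module K V] [FiniteDimensional K V]
    (T : V →ₗ[K] A) : (A × Module.Dual K V) ⊗[K] (A × Module.Dual K V) :=
  TensorProduct.map (LinearMap.inl K A (Module.Dual K V)) (LinearMap.inr K A (Module.Dual K V))
    ((TensorProduct.comm K (Module.Dual K V) A) ((dualTensorHomEquiv K V A).symm T))

/-- `r₁₂ ∗ r₁₃`: on pure tensors, `(a⊗b, c⊗d) ↦ (a∗c) ⊗ b ⊗ d`. -/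
noncomputable def sTerm12_13 {K A : Type*} [Field K] [AddCommGroup A] [Module K A]
    (mul : A →ₗ[K] A →ₗ[K] A) (r s : A ⊗[K] A) : A ⊗[K] (A ⊗[K] A) :=
  (TensorProduct.map (TensorProduct.lift mul) LinearMap.id)
    ((TensorProduct.tensorTensorTensorComm K A A A A) (r ⊗ₜ[K] s))

/-- `r₁₂ ∗ r₂₃`: on pure tensors, `(a⊗b, c⊗d) ↦ a ⊗ (b∗c) ⊗ d`. -/
noncomputable def sTerm12_23 {K A : Type*} [Field K] [AddCommGroup A] [Module K A]
    (mul : A →ₗ[K] A →ₗ[K] A) (r s : A ⊗[K] A) : A ⊗[K] (A ⊗[K] A) :=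
  (TensorProduct.map LinearMap.id
      ((TensorProduct.map (TensorProduct.lift mul) LinearMap.id) ∘ₗ
        (TensorProduct.assoc K A A A).symm.toLinearMap))
    ((TensorProduct.assoc K A A (A ⊗[K] A)) (r ⊗ₜ[K] s))

/-- `[r₁₃, r₂₃]`: on pure tensors, `(a⊗b, c⊗d) ↦ a ⊗ c ⊗ (b∗d − d∗b)`. -/
noncomputable def sTermBr13_23 {K A : Type*} [Field K] [AddCommGroup A] [Module K A]
    (mul : A →ₗ[K] A →ₗ[K] A) (r s : A ⊗[K] A) : A ⊗[K] (A ⊗[K] A) :=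
  (TensorProduct.map LinearMap.id
      (TensorProduct.map LinearMap.id (TensorProduct.lift (mul - mul.flip))))
    ((TensorProduct.assoc K A A (A ⊗[K] A))
      ((TensorProduct.tensorTensorTensorComm K A A A A) (r ⊗ₜ[K] s)))

/-- The S-equation in a pre-Lie algebra: `−r₁₂∗r₁₃ + r₁₂∗r₂₃ + [r₁₃,r₂₃] = 0`. -/
def IsSEquationSolution {K A : Type*} [Field K] [AddCommGroup A] [Module K A]
    (mul : A →ₗ[K] A →ₗ[K] A) (r : A ⊗[K] A) : Prop :=
  -sTerm12_13 mul r r + sTerm12_23 mul r r + sTermBr13_23 mul r r = 0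


/-!
Expand `r = Σᵢ (T vᵢ ⊗ vᵢ* + vᵢ* ⊗ T vᵢ)` in the semidirect product. A product of a `V*`-leg with
an `A`-leg is a twisted leg `vᵢ* ∘ g`, and because `Σᵢ vᵢ ⊗ vᵢ*` is the canonical element, `g` can
be moved onto the partner leg `T vᵢ`. After that every term of the S-equation is built from the
defect `D(u,v) = T u ∘ T v − T (l(T u) v + r(T v) u)`:
`Σⱼₖ (−D(vⱼ,vₖ) ⊗ vⱼ* ⊗ vₖ* + vⱼ* ⊗ D(vⱼ,vₖ) ⊗ vₖ* + vⱼ* ⊗ vₖ* ⊗ (D(vⱼ,vₖ) − D(vₖ,vⱼ)))`,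
and contracting the two outer legs of this tensor with `u` and `w` gives back `D(u,w)`.
-/

namespace Module.Basis

variable {R M N ι : Type*} [CommSemiring R] [AddCommMonoid M] [Module R M] [AddCommMonoid N]
  [Module R N] [Fintype ι]

theorem sum_apply_coord_comp (b : Basis ι R M) (Φ : M →ₗ[R] Dual R M →ₗ[R] N)
    (g : Module.End R M) :
    ∑ i, Φ (b i) (b.coord i ∘ₗ g) = ∑ i, Φ (g (b i)) (b.coord i) := by
  calc ∑ i, Φ (b i) (b.coord i ∘ₗ g)
      = ∑ i, ∑ k, b.coord i (g (b k)) • Φ (b i) (b.coord k) := by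
        refine Finset.sum_congr rfl fun i _ => ?_
        conv_lhs => rw [← b.sum_dual_apply_smul_coord (b.coord i ∘ₗ g)]
        simp only [map_sum, map_smul, LinearMap.comp_apply]
    _ = ∑ k, Φ (g (b k)) (b.coord k) := by
        rw [Finset.sum_comm]
        refine Finset.sum_congr rfl fun k _ => ?_
        conv_rhs => rw [← b.sum_repr (g (b k)), map_sum, LinearMap.sum_apply]
        simp only [map_smul, LinearMap.smul_apply, b.coord_apply]

end Module.Basis

section
variable {K A : Type*} [Field K] [AddCommGroup A] [Module K A]

/-- The S-equation expression with its two occurrences of `r` separated, which makes it bilinear. -/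
noncomputable def sEquationForm (mul : A →ₗ[K] A →ₗ[K] A) :
    A ⊗[K] A →ₗ[K] A ⊗[K] A →ₗ[K] A ⊗[K] (A ⊗[K] A) :=
  TensorProduct.curry
    (-(map (lift mul) LinearMap.id ∘ₗ (tensorTensorTensorComm K A A A A).toLinearMap) +
      map LinearMap.id
          (map (lift mul) LinearMap.id ∘ₗ (TensorProduct.assoc K A A A).symm.toLinearMap) ∘ₗ
        (TensorProduct.assoc K A A (A ⊗[K] A)).toLinearMap +
      map LinearMap.id (map LinearMap.id (lift (mul - mul.flip))) ∘ₗ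
        (TensorProduct.assoc K A A (A ⊗[K] A)).toLinearMap ∘ₗ
        (tensorTensorTensorComm K A A A A).toLinearMap)

theorem isSEquationSolution_iff (mul : A →ₗ[K] A →ₗ[K] A) (r : A ⊗[K] A) :
    IsSEquationSolution mul r ↔ sEquationForm mul r r = 0 := Iff.rfl

theorem sEquationForm_tmul (mul : A →ₗ[K] A →ₗ[K] A) (a b c d : A) :
    sEquationForm mul (a ⊗ₜ b) (c ⊗ₜ d) =
      -(mul a c ⊗ₜ (b ⊗ₜ d)) + a ⊗ₜ (mul b c ⊗ₜ d) + a ⊗ₜ (c ⊗ₜ (mul b d - mul d b)) := by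
  simp [sEquationForm]

end

section
variable {K A V ι : Type*} [Field K] [AddCommGroup A] [Module K A] [AddCommGroup V] [Module K V]
  [Fintype ι] (mul : A →ₗ[K] A →ₗ[K] A) (l r : A →ₗ[K] Module.End K V)

local notation "E" => A × Module.Dual K V
local notation "inA" => LinearMap.inl K A (Module.Dual K V)
local notation "inD" => LinearMap.inr K A (Module.Dual K V)

theorem semidirectMul_inl_inl (x y : A) :
    semidirectMul mul l r (inA x) (inA y) = inA (mul x y) := by
  simp [semidirectMul]

theorem semidirectMul_inl_inr (x : A) (φ : Module.Dual K V) :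
    semidirectMul mul l r (inA x) (inD φ) = inD (φ ∘ₗ (r - l) x) := by
  simp [semidirectMul, dualRep, Module.Dual.transpose_apply, LinearMap.comp_sub]
  abel

theorem semidirectMul_inr_inl (φ : Module.Dual K V) (y : A) :
    semidirectMul mul l r (inD φ) (inA y) = inD (φ ∘ₗ r y) := by
  simp [semidirectMul, dualRep, Module.Dual.transpose_apply]

theorem semidirectMul_inr_inr (φ ψ : Module.Dual K V) :
    semidirectMul mul l r (inD φ) (inD ψ) = 0 := by
  simp [semidirectMul, dualRep]

theorem elemOfMap_eq_sum [FiniteDimensional K V] (b : Module.Basis ι K V) (T : V →ₗ[K] A) :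
    elemOfMap T = ∑ i, inA (T (b i)) ⊗ₜ inD (b.coord i) := by
  classical
  have h : (dualTensorHomEquiv K V A).symm T = ∑ i, b.coord i ⊗ₜ T (b i) := by
    rw [dualTensorHomEquiv_eq_dualTensorHomEquivOfBasis b]
    simp [dualTensorHomEquivOfBasis]
  rw [elemOfMap, h]
  simp [map_sum]

theorem sum_inl_inr_coord_comp {N : Type*} [AddCommGroup N] [Module K N] (b : Module.Basis ι K V)
    (T : V →ₗ[K] A) (g : Module.End K V) (Ψ : E →ₗ[K] E →ₗ[K] N) :
    ∑ i, Ψ (inA (T (b i))) (inD (b.coord i ∘ₗ g)) = ∑ i, Ψ (inA (T (g (b i)))) (inD (b.coord i)) :=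
  b.sum_apply_coord_comp ((Ψ ∘ₗ inA ∘ₗ T).compl₂ inD) g

noncomputable def oOperatorDefect (T : V →ₗ[K] A) : V →ₗ[K] V →ₗ[K] A :=
  LinearMap.mk₂ K (fun u v => mul (T u) (T v) - T (l (T u) v) - T (r (T v) u))
    (by intros; simp only [map_add, LinearMap.add_apply]; abel)
    (by intros; simp only [map_smul, LinearMap.smul_apply, smul_sub])
    (by intros; simp only [map_add, LinearMap.add_apply]; abel)
    (by intros; simp only [map_smul, LinearMap.smul_apply, smul_sub])

@[simp] theorem oOperatorDefect_apply (T : V →ₗ[K] A) (u v : V) :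
    oOperatorDefect mul l r T u v = mul (T u) (T v) - T (l (T u) v) - T (r (T v) u) := rfl

theorem isOOperator_iff_oOperatorDefect_eq_zero (T : V →ₗ[K] A) :
    IsOOperator mul l r T ↔ oOperatorDefect mul l r T = 0 := by
  simp [IsOOperator, LinearMap.ext_iff, sub_sub, sub_eq_zero]

noncomputable def defectTensor (b : Module.Basis ι K V) (β : V →ₗ[K] V →ₗ[K] A) :
    E ⊗[K] (E ⊗[K] E) :=
  ∑ j, ∑ k, (-(inA (β (b j) (b k)) ⊗ₜ (inD (b.coord j) ⊗ₜ inD (b.coord k))) +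
    inD (b.coord j) ⊗ₜ (inA (β (b j) (b k)) ⊗ₜ inD (b.coord k)) +
    inD (b.coord j) ⊗ₜ (inD (b.coord k) ⊗ₜ inA (β (b j) (b k) - β (b k) (b j))))

theorem sEquationForm_eq_defectTensor [FiniteDimensional K V] (b : Module.Basis ι K V)
    (T : V →ₗ[K] A) :
    sEquationForm (semidirectMul mul l r) (elemOfMap T + TensorProduct.comm K E E (elemOfMap T))
      (elemOfMap T + TensorProduct.comm K E E (elemOfMap T)) =
      defectTensor b (oOperatorDefect mul l r T) := by
  -- In `twistᵢⱼ` the `A`-leg sits in tensor slot `i` and the twisted `V*`-leg in slot `j`.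
  let transfer := sum_inl_inr_coord_comp (N := E ⊗[K] (E ⊗[K] E)) b T
  let mk₁ := TensorProduct.mk K E (E ⊗[K] E)
  let mk₂ := TensorProduct.mk K E E
  have twist₁₂ : ∑ j, ∑ k, inA (T (b j)) ⊗ₜ (inD (b.coord j ∘ₗ r (T (b k))) ⊗ₜ inD (b.coord k)) =
      ∑ j, ∑ k, inA (T (r (T (b k)) (b j))) ⊗ₜ (inD (b.coord j) ⊗ₜ inD (b.coord k)) :=
    Finset.sum_comm.trans ((Finset.sum_congr rfl fun k _ =>
      transfer _ (mk₁.compl₂ (mk₂.flip (inD (b.coord k))))).trans Finset.sum_comm)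
  have twist₂₁ : ∑ j, ∑ k, inD (b.coord j ∘ₗ r (T (b k))) ⊗ₜ (inA (T (b j)) ⊗ₜ inD (b.coord k)) =
      ∑ j, ∑ k, inD (b.coord j) ⊗ₜ (inA (T (r (T (b k)) (b j))) ⊗ₜ inD (b.coord k)) :=
    Finset.sum_comm.trans ((Finset.sum_congr rfl fun k _ =>
      transfer _ (mk₁.compl₂ (mk₂.flip (inD (b.coord k)))).flip).trans Finset.sum_comm)
  have twist₂₃ : ∑ j, ∑ k, inD (b.coord j) ⊗ₜ (inA (T (b k)) ⊗ₜ inD (b.coord k ∘ₗ l (T (b j)))) =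
      ∑ j, ∑ k, inD (b.coord j) ⊗ₜ (inA (T (l (T (b j)) (b k))) ⊗ₜ inD (b.coord k)) :=
    Finset.sum_congr rfl fun j _ => transfer _ (mk₂.compr₂ (mk₁ (inD (b.coord j))))
  have twist₃₁ : ∑ j, ∑ k, inD (b.coord k ∘ₗ (r (T (b j)) - l (T (b j)))) ⊗ₜ
        (inD (b.coord j) ⊗ₜ inA (T (b k))) =
      ∑ k, ∑ j, inD (b.coord k) ⊗ₜ
        (inD (b.coord j) ⊗ₜ inA (T ((r (T (b j)) - l (T (b j))) (b k)))) :=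
    (Finset.sum_congr rfl fun j _ =>
      transfer _ (mk₁.compl₂ (mk₂ (inD (b.coord j)))).flip).trans Finset.sum_comm
  have twist₁₃ : ∑ j, ∑ k, inA (T (b j)) ⊗ₜ (inD (b.coord k) ⊗ₜ inD (b.coord j ∘ₗ l (T (b k)))) =
      ∑ k, ∑ j, inA (T (l (T (b k)) (b j))) ⊗ₜ (inD (b.coord k) ⊗ₜ inD (b.coord j)) :=
    Finset.sum_comm.trans (Finset.sum_congr rfl fun k _ =>
      transfer _ (mk₁.compl₂ (mk₂ (inD (b.coord k)))))
  have twist₃₂ : ∑ j, ∑ k, inD (b.coord j) ⊗ₜ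
        (inD (b.coord k ∘ₗ (r (T (b j)) - l (T (b j)))) ⊗ₜ inA (T (b k))) =
      ∑ j, ∑ k, inD (b.coord j) ⊗ₜ
        (inD (b.coord k) ⊗ₜ inA (T ((r (T (b j)) - l (T (b j))) (b k)))) :=
    Finset.sum_congr rfl fun j _ => transfer _ (mk₂.compr₂ (mk₁ (inD (b.coord j)))).flip
  rw [elemOfMap_eq_sum b, map_sum, ← Finset.sum_add_distrib, LinearMap.map_sum₂]
  simp only [map_sum, map_add, LinearMap.add_apply, sEquationForm_tmul, comm_tmul,
    semidirectMul_inl_inl, semidirectMul_inl_inr, semidirectMul_inr_inl, semidirectMul_inr_inr,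
    ← map_sub, ← LinearMap.comp_sub, LinearMap.sub_apply, sub_sub_cancel, sub_sub_cancel_left,
    LinearMap.comp_neg, map_neg, tmul_zero, zero_tmul, neg_zero, add_zero, zero_add, tmul_neg,
    Finset.sum_add_distrib, Finset.sum_neg_distrib, sub_self]
  rw [twist₁₂, twist₂₁, twist₂₃, twist₃₁, twist₁₃, twist₃₂]
  simp only [defectTensor, oOperatorDefect_apply, LinearMap.sub_apply, map_sub, tmul_sub, sub_tmul,
    Finset.sum_add_distrib, Finset.sum_sub_distrib, Finset.sum_neg_distrib]
  abel

noncomputable def contractOuter (u w : V) : E ⊗[K] (E ⊗[K] E) →ₗ[K] A :=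
  (TensorProduct.lid K A).toLinearMap ∘ₗ
    map (Module.Dual.eval K V u ∘ₗ LinearMap.snd K A (Module.Dual K V))
      ((TensorProduct.rid K A).toLinearMap ∘ₗ
        map (LinearMap.fst K A (Module.Dual K V))
          (Module.Dual.eval K V w ∘ₗ LinearMap.snd K A (Module.Dual K V)))

theorem contractOuter_tmul (u w : V) (p q s : E) :
    contractOuter u w (p ⊗ₜ (q ⊗ₜ s)) = p.2 u • s.2 w • q.1 := by
  simp [contractOuter, smul_comm (p.2 u)]

theorem contractOuter_defectTensor (b : Module.Basis ι K V) (β : V →ₗ[K] V →ₗ[K] A) (u w : V) :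
    contractOuter u w (defectTensor b β) = β u w := by
  simp only [defectTensor, map_sum, map_add, map_neg, contractOuter_tmul, LinearMap.inl_apply,
    LinearMap.inr_apply, smul_zero, neg_zero, add_zero, zero_add, b.coord_apply]
  conv_rhs => rw [← b.sum_repr u, ← b.sum_repr w]
  simp only [map_sum, map_smul, LinearMap.sum_apply, LinearMap.smul_apply, Finset.smul_sum]
  rw [Finset.sum_comm]
  simp only [smul_comm ((b.repr u) _)]

theorem defectTensor_eq_zero_iff (b : Module.Basis ι K V) (β : V →ₗ[K] V →ₗ[K] A) :
    defectTensor b β = 0 ↔ β = 0 := by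
  refine ⟨fun h => LinearMap.ext₂ fun u w => ?_, fun h => ?_⟩
  · simpa [h] using (contractOuter_defectTensor b β u w).symm
  · simp only [h, defectTensor, LinearMap.zero_apply, sub_self, map_zero, zero_tmul, tmul_zero,
      neg_zero, add_zero, Finset.sum_const_zero]

end

theorem symmetric_sEquation_solution_iff_OOperator_general
    {K A V : Type*} [Field K] [AddCommGroup A] [Module K A]
    [AddCommGroup V] [Module K V] [FiniteDimensional K V]
    (mul : A →ₗ[K] A →ₗ[K] A)
    (l r : A →ₗ[K] Module.End K V)
    (T : V →ₗ[K] A) :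
    (TensorProduct.comm K _ _ (elemOfMap (K := K) T + (TensorProduct.comm K _ _) (elemOfMap (K := K) T))
        = elemOfMap (K := K) T + (TensorProduct.comm K _ _) (elemOfMap (K := K) T)) ∧
    (IsSEquationSolution (semidirectMul mul l r)
        (elemOfMap (K := K) T + (TensorProduct.comm K _ _) (elemOfMap (K := K) T)) ↔
      IsOOperator mul l r T) := by
  refine ⟨by rw [map_add, comm_comm, add_comm], ?_⟩
  rw [isSEquationSolution_iff, sEquationForm_eq_defectTensor mul l r (Module.finBasis K V),
    defectTensor_eq_zero_iff, isOOperator_iff_oOperatorDefect_eq_zero]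

/-- Let `(A,∘)` be a pre-Lie algebra, `(l,r,V)` a module with `V`
finite-dimensional, and `T : V → A` a linear map identified with the element
`Σᵢ T(vᵢ)⊗vᵢ*` of `(A⊕V*)⊗(A⊕V*)`. Then `r = T + σ(T)` is a symmetric solution of
the S-equation in the semidirect product pre-Lie algebra `A ⋉_{l*−r*, −r*} V*` if
and only if `T` is an O-operator of `(A,∘)` associated to `(l,r,V)`. -/
theorem symmetric_sEquation_solution_iff_OOperator
    {K A V : Type*} [Field K] [CharZero K] [AddCommGroup A] [Module K A]
    [AddCommGroup V] [Module K V] [FiniteDimensional K V]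
    (mul : A →ₗ[K] A →ₗ[K] A) (hA : IsPreLie mul)
    (l r : A →ₗ[K] Module.End K V) (hmod : IsPreLieModule mul l r)
    (T : V →ₗ[K] A) :
    (TensorProduct.comm K _ _ (elemOfMap (K := K) T + (TensorProduct.comm K _ _) (elemOfMap (K := K) T))
        = elemOfMap (K := K) T + (TensorProduct.comm K _ _) (elemOfMap (K := K) T)) ∧
    (IsSEquationSolution (semidirectMul mul l r)
        (elemOfMap (K := K) T + (TensorProduct.comm K _ _) (elemOfMap (K := K) T)) ↔
      IsOOperator mul l r T) :=
  symmetric_sEquation_solution_iff_OOperator_general mul l r T
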